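/- For x ∈ (-1,1), the Hadamard finite part of ∫_{-1}^{1} √(1-t²)/(t-x)² dt equals -π; that is, lim_{ε→0⁺}[∫_{-1}^{x-ε} √(1-t²)/(t-x)² dt + ∫_{x+ε}^{1} √(1-t²)/(t-x)² dt - (√(1-(x+ε)²)+√(1-(x-ε)²))/ε] = -π. -/

import Mathlib

/-!
With `q = √(1 - x²)`, the function
`F t = √(1 - t²)/(x - t) - arcsin t + (x/q) (log (1 - x t + q √(1 - t²)) - log |t - x|)`
is a primitive of `√(1 - t²)/(t - x)²` on `(-1, 1) \ {x}`, continuous up to `t = ±1`, where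
it equals `∓π/2`. In `F (x - ε) - F (x + ε)` the pole terms produce exactly the boundary
correction `(√(1 - (x + ε)²) + √(1 - (x - ε)²))/ε`, the `log |t - x|` terms cancel, and what
remains is the increment of a function continuous at `x`, which tends to `0`. So the finite part
is `-π/2 - π/2`.
-/

open Real Filter Set Topology intervalIntegral

variable {x t : ℝ}

lemma hasDerivAt_sqrt_one_sub_sq (ht : t ∈ Ioo (-1) 1) :
    HasDerivAt (fun u => √(1 - u ^ 2)) (-t / √(1 - t ^ 2)) t := by
  have := ((hasDerivAt_pow 2 t).const_sub 1).sqrt (by nlinarith [ht.1, ht.2])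
  convert this using 1
  field_simp
  ring

lemma one_sub_mul_add_sqrt_mul_sqrt_pos (hx : x ∈ Ioo (-1) 1) (ht : t ∈ Icc (-1) 1) :
    0 < 1 - x * t + √(1 - x ^ 2) * √(1 - t ^ 2) := by
  have : 0 < 1 - x * t := by
    nlinarith [mul_nonneg (sub_nonneg.2 ht.2) (neg_le_iff_add_nonneg.1 ht.1),
      mul_pos (sub_pos.2 hx.2) (neg_lt_iff_pos_add.1 hx.1), sq_nonneg (x - t)]
  positivity

lemma hasDerivAt_log_sub_log (hx : x ∈ Ioo (-1) 1) (ht : t ∈ Ioo (-1) 1) (hxt : t ≠ x) :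
    HasDerivAt (fun u => log (1 - x * u + √(1 - x ^ 2) * √(1 - u ^ 2)) - log (u - x))
      (-√(1 - x ^ 2) / (√(1 - t ^ 2) * (t - x))) t := by
  set q := √(1 - x ^ 2)
  have hA := one_sub_mul_add_sqrt_mul_sqrt_pos hx (Ioo_subset_Icc_self ht)
  have hA' : HasDerivAt (fun u => 1 - x * u + q * √(1 - u ^ 2))
      (-x + q * (-t / √(1 - t ^ 2))) t :=
    (((hasDerivAt_id t).const_mul x).const_sub 1 |>.add
      ((hasDerivAt_sqrt_one_sub_sq ht).const_mul q)).congr_deriv (by ring)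
  have hsub : HasDerivAt (fun u => u - x) 1 t := (hasDerivAt_id t).sub_const x
  refine ((hA'.log hA.ne').sub (hsub.log (sub_ne_zero.2 hxt))).congr_deriv ?_
  set s := √(1 - t ^ 2)
  have hq : q ^ 2 = 1 - x ^ 2 := sq_sqrt (by nlinarith [hx.1, hx.2])
  have hs : s ^ 2 = 1 - t ^ 2 := sq_sqrt (by nlinarith [ht.1, ht.2])
  have hs0 : 0 < s := sqrt_pos.2 (by nlinarith [ht.1, ht.2])
  have htx : t - x ≠ 0 := sub_ne_zero.2 hxt
  have hA0 : 1 - x * t + q * s ≠ 0 := hA.ne'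
  field_simp
  -- the identity `(x s + q t)(t - x) + s A = q A` for the logarithm's argument `A`
  linear_combination s * hq - q * hs

variable (x) in
noncomputable def regularPart (t : ℝ) : ℝ :=
  -arcsin t + x / √(1 - x ^ 2) * log (1 - x * t + √(1 - x ^ 2) * √(1 - t ^ 2))

-- `Real.log` is even, so the last term is `log |t - x|` also for `t < x`.
variable (x) in
noncomputable def finitePartPrimitive (t : ℝ) : ℝ :=
  √(1 - t ^ 2) / (x - t) + regularPart x t - x / √(1 - x ^ 2) * log (t - x)

lemma hasDerivAt_finitePartPrimitive (hx : x ∈ Ioo (-1) 1) (ht : t ∈ Ioo (-1) 1)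
    (hxt : t ≠ x) :
    HasDerivAt (finitePartPrimitive x) (√(1 - t ^ 2) / (t - x) ^ 2) t := by
  have hpole := (hasDerivAt_sqrt_one_sub_sq ht).div ((hasDerivAt_id t).const_sub x)
    (sub_ne_zero.2 hxt.symm)
  have harcsin := hasDerivAt_arcsin (ne_of_gt ht.1) (ne_of_lt ht.2)
  have hlog := (hasDerivAt_log_sub_log hx ht hxt).const_mul (x / √(1 - x ^ 2))
  refine (((hpole.sub harcsin).add hlog).congr_deriv ?_).congr_of_eventuallyEq
    (Eventually.of_forall fun u => ?_)
  · have hs0 : 0 < √(1 - t ^ 2) := sqrt_pos.2 (by nlinarith [ht.1, ht.2])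
    have hq0 : 0 < √(1 - x ^ 2) := sqrt_pos.2 (by nlinarith [hx.1, hx.2])
    have htx : t - x ≠ 0 := sub_ne_zero.2 hxt
    have hxt : x - t ≠ 0 := sub_ne_zero.2 hxt.symm
    simp only [id]
    field_simp
    ring
  · simp only [finitePartPrimitive, regularPart, id, Pi.add_apply, Pi.sub_apply, Pi.div_apply]
    ring

lemma continuousOn_finitePartPrimitive (hx : x ∈ Ioo (-1) 1) {s : Set ℝ}
    (hs : s ⊆ Icc (-1) 1) (hxs : x ∉ s) : ContinuousOn (finitePartPrimitive x) s := by
  have hne : ∀ t ∈ s, t ≠ x := fun t ht => ne_of_mem_of_not_mem ht hxs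
  have hlog : ContinuousOn (fun t => log (1 - x * t + √(1 - x ^ 2) * √(1 - t ^ 2))) s :=
    ContinuousOn.log (by fun_prop) fun t ht =>
      (one_sub_mul_add_sqrt_mul_sqrt_pos hx (hs ht)).ne'
  unfold finitePartPrimitive regularPart
  exact ((ContinuousOn.div (by fun_prop) (by fun_prop) fun t ht =>
    sub_ne_zero.2 (hne t ht).symm).add
    ((continuous_arcsin.continuousOn.neg).add (continuousOn_const.mul hlog))).sub
    (continuousOn_const.mul (ContinuousOn.log (by fun_prop) fun t ht => sub_ne_zero.2 (hne t ht)))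

lemma integral_eq_finitePartPrimitive_sub (hx : x ∈ Ioo (-1) 1) {a b : ℝ} (hab : a ≤ b)
    (ha : -1 ≤ a) (hb : b ≤ 1) (hxab : x ∉ Icc a b) :
    ∫ t in a..b, √(1 - t ^ 2) / (t - x) ^ 2 =
      finitePartPrimitive x b - finitePartPrimitive x a := by
  have hne : ∀ t ∈ Icc a b, t ≠ x := fun t ht => ne_of_mem_of_not_mem ht hxab
  refine integral_eq_sub_of_hasDerivAt_of_le hab
    (continuousOn_finitePartPrimitive hx (Icc_subset_Icc ha hb) hxab)
    (fun t ht => hasDerivAt_finitePartPrimitive hx ⟨ha.trans_lt ht.1, ht.2.trans_le hb⟩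
      (hne t (Ioo_subset_Icc_self ht))) ?_
  refine ContinuousOn.intervalIntegrable (ContinuousOn.div (by fun_prop) (by fun_prop) ?_)
  rw [uIcc_of_le hab]
  exact fun t ht => pow_ne_zero 2 (sub_ne_zero.2 (hne t ht))

lemma finitePartPrimitive_neg_one : finitePartPrimitive x (-1) = π / 2 := by
  rw [finitePartPrimitive, regularPart, show -1 - x = -(1 + x) by ring, log_neg_eq_log]
  simp

lemma finitePartPrimitive_one : finitePartPrimitive x 1 = -(π / 2) := by
  simp [finitePartPrimitive, regularPart]

lemma finitePartPrimitive_sub_sub_add {ε : ℝ} (hε : ε ≠ 0) :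
    finitePartPrimitive x (x - ε) - finitePartPrimitive x (x + ε) =
      (√(1 - (x + ε) ^ 2) + √(1 - (x - ε) ^ 2)) / ε +
        (regularPart x (x - ε) - regularPart x (x + ε)) := by
  simp only [finitePartPrimitive, show x - (x - ε) = ε by ring, show x - (x + ε) = -ε by ring,
    show x - ε - x = -ε by ring, show x + ε - x = ε by ring, log_neg_eq_log]
  field_simp
  ring

lemma tendsto_regularPart_sub (hx : x ∈ Ioo (-1) 1) :
    Tendsto (fun ε => regularPart x (x - ε) - regularPart x (x + ε)) (𝓝 0) (𝓝 0) := by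
  have hc : ContinuousAt (regularPart x) x := by
    unfold regularPart
    have := (one_sub_mul_add_sqrt_mul_sqrt_pos hx (Ioo_subset_Icc_self hx)).ne'
    fun_prop (disch := assumption)
  have h := (hc.comp_of_eq (by fun_prop : ContinuousAt (fun ε : ℝ => x - ε) 0) (sub_zero x)).sub
    (hc.comp_of_eq (by fun_prop : ContinuousAt (fun ε : ℝ => x + ε) 0) (add_zero x))
  simpa [Function.comp_def, Pi.sub_def] using h.tendsto

theorem stmt_7 (x : ℝ) (hx : x ∈ Set.Ioo (-1 : ℝ) 1) :
    Tendsto (fun ε : ℝ =>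
        (∫ t in (-1 : ℝ)..(x - ε), Real.sqrt (1 - t ^ 2) / (t - x) ^ 2) +
        (∫ t in (x + ε)..(1 : ℝ), Real.sqrt (1 - t ^ 2) / (t - x) ^ 2) -
        (Real.sqrt (1 - (x + ε) ^ 2) + Real.sqrt (1 - (x - ε) ^ 2)) / ε)
      (nhdsWithin 0 (Set.Ioi 0)) (nhds (-Real.pi)) := by
  have hlim := ((tendsto_regularPart_sub hx).mono_left
    (nhdsWithin_le_nhds (s := Ioi 0))).const_add (-π)
  rw [add_zero] at hlim
  refine hlim.congr' ?_
  filter_upwards [Ioo_mem_nhdsGT (lt_min (neg_lt_iff_pos_add.1 hx.1) (sub_pos.2 hx.2))]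
    with ε ⟨hε, hεx⟩
  obtain ⟨hεl, hεr⟩ := lt_min_iff.1 hεx
  rw [integral_eq_finitePartPrimitive_sub hx (by linarith) le_rfl (by linarith [hx.2])
      (fun h => by linarith [h.2]),
    integral_eq_finitePartPrimitive_sub hx (by linarith) (by linarith [hx.1]) le_rfl
      (fun h => by linarith [h.1]),
    finitePartPrimitive_neg_one, finitePartPrimitive_one]
  linear_combination -(finitePartPrimitive_sub_sub_add (x := x) hε.ne')
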